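/- For every positive integer n, one has F̃(0) = 0, the function F̃ has derivative at λ = 0 equal to (2nπ − sinh(2nπ)) / (2 n³π³ · cosh²(nπ)), and this derivative is strictly negative. Hence λ = 0 is a simple root of the eigenvalue equation. -/

import Mathlib

/-!
Write `g y = tanh √y / √y` and `s = nπ`, so that `F̃ λ = g (s² + λ) - g (s² - λ)`. This vanishes
trivially at `λ = 0`, and `F̃'(0) = 2 g'(s²) = (s - sinh s cosh s) / (s³ cosh² s)`, which is the
stated value by `sinh 2s = 2 sinh s cosh s`. It is negative because `sinh x > x` for `x > 0`.
-/

open Real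

theorem Real.hasDerivAt_tanh (x : ℝ) : HasDerivAt tanh (cosh x ^ 2)⁻¹ x := by
  have h := (hasDerivAt_sinh x).div (hasDerivAt_cosh x) (cosh_pos x).ne'
  rw [show sinh / cosh = tanh from funext fun y => (tanh_eq_sinh_div_cosh y).symm] at h
  refine h.congr_deriv ?_
  rw [← sq, ← sq, cosh_sq_sub_sinh_sq, one_div]

theorem hasDerivAt_tanh_sqrt_div_sqrt {s : ℝ} (hs : 0 < s) :
    HasDerivAt (fun y => tanh √y / √y)
      ((s - sinh s * cosh s) / (2 * s ^ 3 * cosh s ^ 2)) (s ^ 2) := by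
  have hsqrt : √(s ^ 2) = s := sqrt_sq hs.le
  have h_sqrt : HasDerivAt (fun y => √y) (1 / (2 * s)) (s ^ 2) := by
    simpa [hsqrt] using hasDerivAt_sqrt (pow_pos hs 2).ne'
  have h_tanh := (hasDerivAt_tanh (√(s ^ 2))).comp (s ^ 2) h_sqrt
  rw [hsqrt] at h_tanh
  refine (h_tanh.div h_sqrt (by rw [hsqrt]; exact hs.ne')).congr_deriv ?_
  rw [Function.comp_apply, hsqrt, tanh_eq_sinh_div_cosh]
  field_simp

/-- For every positive integer `n`, the function
`F̃(λ) = tanh(√(λ+n²π²))/√(λ+n²π²) − tanh(√(n²π²−λ))/√(n²π²−λ)` satisfies `F̃(0) = 0`,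
has derivative at `λ = 0` equal to `(2nπ − sinh(2nπ))/(2n³π³·cosh²(nπ))`, and this
derivative is strictly negative; hence `λ = 0` is a simple root of the eigenvalue equation. -/
theorem stmt_3 (n : ℕ) (hn : 0 < n) :
    (Real.tanh (Real.sqrt ((0:ℝ) + (n : ℝ)^2 * π^2)) / Real.sqrt ((0:ℝ) + (n : ℝ)^2 * π^2)
      - Real.tanh (Real.sqrt ((n : ℝ)^2 * π^2 - 0)) / Real.sqrt ((n : ℝ)^2 * π^2 - 0) = 0)
    ∧ HasDerivAt
        (fun l : ℝ =>
          Real.tanh (Real.sqrt (l + (n : ℝ)^2 * π^2)) / Real.sqrt (l + (n : ℝ)^2 * π^2)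
            - Real.tanh (Real.sqrt ((n : ℝ)^2 * π^2 - l)) / Real.sqrt ((n : ℝ)^2 * π^2 - l))
        ((2 * (n : ℝ) * π - Real.sinh (2 * (n : ℝ) * π))
          / (2 * (n : ℝ)^3 * π^3 * (Real.cosh ((n : ℝ) * π))^2))
        0
    ∧ (2 * (n : ℝ) * π - Real.sinh (2 * (n : ℝ) * π))
        / (2 * (n : ℝ)^3 * π^3 * (Real.cosh ((n : ℝ) * π))^2) < 0 := by
  have hs : 0 < (n : ℝ) * π := by positivity
  have hg := hasDerivAt_tanh_sqrt_div_sqrt hs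
  rw [mul_pow (n : ℝ) π 2] at hg
  refine ⟨by simp, ?_, ?_⟩
  · have h_add := HasDerivAt.comp_add_const 0 ((n : ℝ) ^ 2 * π ^ 2) (by rwa [zero_add])
    have h_sub := HasDerivAt.comp_const_sub ((n : ℝ) ^ 2 * π ^ 2) 0 (by rwa [sub_zero])
    refine (h_add.sub h_sub).congr_deriv ?_
    rw [mul_assoc 2 (n : ℝ) π, sinh_two_mul]
    ring
  · have hsinh := self_lt_sinh_iff.2 (by positivity : 0 < 2 * (n : ℝ) * π)
    exact div_neg_of_neg_of_pos (by linarith) (by positivity)
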